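/- arXiv:1204.2843 — 2 statements merged into one kernel-verified Lean document; each statement's English description precedes it below -/
import Mathlib

section
/- If a subgroup G ≤ Aut(X*) is contracting, then every element of N_1 has finite order; that is, every g ∈ G for which there exists a non-empty word v ∈ X* with g|_v = g and g(v) = v is a torsion element of G. -/
/-- The automorphism group of the rooted `d`-ary tree `X*` (words over `Fin d`),
realized as the subgroup of permutations of `List (Fin d)` preserving word length
and the prefix relation. -/
def treeAutGroup (d : ℕ) : Subgroup (Equiv.Perm (List (Fin d))) where
  carrier := {g | (∀ v, (g v).length = v.length) ∧ ∀ v w, v <+: w ↔ g v <+: g w}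
  one_mem' := ⟨fun _ => rfl, fun _ _ => Iff.rfl⟩
  mul_mem' := by
    rintro a b ⟨ha1, ha2⟩ ⟨hb1, hb2⟩
    refine ⟨fun v => ?_, fun v w => ?_⟩
    · simpa [Equiv.Perm.mul_apply] using (ha1 (b v)).trans (hb1 v)
    · simpa [Equiv.Perm.mul_apply] using (hb2 v w).trans (ha2 (b v) (b w))
  inv_mem' := by
    rintro g ⟨h1, h2⟩
    refine ⟨fun v => ?_, fun v w => ?_⟩
    · conv_rhs => rw [← Equiv.apply_symm_apply g v]
      exact (h1 _).symm
    · have := (h2 (g⁻¹ v) (g⁻¹ w)).symm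
      simpa [Equiv.apply_symm_apply] using this

/-- An automorphism of the rooted `d`-ary tree. -/
abbrev TreeAut (d : ℕ) : Type := ↥(treeAutGroup d)

namespace TreeAut

variable {d : ℕ}

theorem length_apply (g : TreeAut d) (v : List (Fin d)) :
    ((g : Equiv.Perm (List (Fin d))) v).length = v.length := g.2.1 v

theorem prefix_iff (g : TreeAut d) (v w : List (Fin d)) :
    v <+: w ↔ (g : Equiv.Perm (List (Fin d))) v <+: (g : Equiv.Perm (List (Fin d))) w :=
  g.2.2 v w

theorem apply_append (g : TreeAut d) (v w : List (Fin d)) :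
    (g : Equiv.Perm (List (Fin d))) (v ++ w) =
      (g : Equiv.Perm (List (Fin d))) v ++
        (((g : Equiv.Perm (List (Fin d))) (v ++ w)).drop v.length) := by
  obtain ⟨t, ht⟩ := (g.prefix_iff v (v ++ w)).mp ⟨w, rfl⟩
  rw [← ht, List.drop_left' (g.length_apply v)]

/-- The restriction of a tree automorphism at the vertex `v`, as a permutation of words:
the unique map with `g (v ++ w) = g v ++ (restrictPerm g v) w`. -/
def restrictPerm (g : TreeAut d) (v : List (Fin d)) : Equiv.Perm (List (Fin d)) where
  toFun w := (((g : Equiv.Perm (List (Fin d)))) (v ++ w)).drop v.length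
  invFun w := (((g : Equiv.Perm (List (Fin d))).symm)
      (((g : Equiv.Perm (List (Fin d))) v) ++ w)).drop v.length
  left_inv w := by
    dsimp only
    have h := (g.apply_append v w).symm
    rw [h, Equiv.symm_apply_apply, List.drop_left]
  right_inv w := by
    dsimp only
    have hpre : v <+: (g : Equiv.Perm (List (Fin d))).symm
        ((g : Equiv.Perm (List (Fin d))) v ++ w) := by
      have := (g.prefix_iff v ((g : Equiv.Perm (List (Fin d))).symm
        ((g : Equiv.Perm (List (Fin d))) v ++ w))).symm
      rw [Equiv.apply_symm_apply] at this
      exact this.mp ⟨w, rfl⟩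
    obtain ⟨u, hu⟩ := hpre
    rw [← hu, List.drop_left]
    have h2 : (g : Equiv.Perm (List (Fin d))) (v ++ u) =
        (g : Equiv.Perm (List (Fin d))) v ++ w := by rw [hu, Equiv.apply_symm_apply]
    rw [h2, List.drop_left' (g.length_apply v)]

theorem restrictPerm_mem (g : TreeAut d) (v : List (Fin d)) :
    restrictPerm g v ∈ treeAutGroup d := by
  constructor
  · intro w
    show (((g : Equiv.Perm (List (Fin d))) (v ++ w)).drop v.length).length = w.length
    rw [List.length_drop, g.length_apply, List.length_append]
    omega
  · intro w w'
    show w <+: w' ↔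
      ((g : Equiv.Perm (List (Fin d))) (v ++ w)).drop v.length <+:
        ((g : Equiv.Perm (List (Fin d))) (v ++ w')).drop v.length
    calc w <+: w' ↔ v ++ w <+: v ++ w' := (List.prefix_append_right_inj v).symm
      _ ↔ (g : Equiv.Perm (List (Fin d))) (v ++ w) <+:
            (g : Equiv.Perm (List (Fin d))) (v ++ w') := g.prefix_iff _ _
      _ ↔ _ := by
            conv_lhs => rw [g.apply_append v w, g.apply_append v w']
            exact List.prefix_append_right_inj _

/-- The restriction `g|_v` of a tree automorphism `g` at a vertex `v`, as a tree
automorphism: the unique automorphism with `g (v ++ w) = g v ++ g|_v w` for all `w`. -/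
def restrict (g : TreeAut d) (v : List (Fin d)) : TreeAut d :=
  ⟨restrictPerm g v, restrictPerm_mem g v⟩

/-- `g` fixes the end (infinite word) `w` of the tree: it fixes every finite initial
segment of `w`. -/
def FixesEnd (g : TreeAut d) (w : ℕ → Fin d) : Prop :=
  ∀ n : ℕ, (g : Equiv.Perm (List (Fin d))) ((List.range n).map w) = (List.range n).map w

end TreeAut

/-- `g` is spherically transitive: the cyclic group it generates acts transitively on
the words of length `n`, for every `n ≥ 1`. -/
def SphericallyTransitive {d : ℕ} (g : TreeAut d) : Prop :=
  ∀ n : ℕ, 1 ≤ n → ∀ v w : List (Fin d), v.length = n → w.length = n →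
    ∃ k : ℤ, ((g ^ k : TreeAut d) : Equiv.Perm (List (Fin d))) v = w

/-- The `n`-th level of the tree: words of length `n`. -/
abbrev Level (d n : ℕ) : Type := {v : List (Fin d) // v.length = n}

instance Level.finite (d n : ℕ) : Finite (Level d n) := by
  have key : ∀ v : Level d n,
      v.1 = List.ofFn (fun i : Fin n => v.1.get (Fin.cast v.2.symm i)) := by
    intro v
    refine List.ext_get (by simp [v.2]) ?_
    intro i h1 h2
    simp [List.get_ofFn, Fin.cast]
  refine Finite.of_injective
    (fun v : Level d n => fun i : Fin n => v.1.get (Fin.cast v.2.symm i)) ?_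
  intro v w h
  have h' : (fun i : Fin n => v.1.get (Fin.cast v.2.symm i)) =
      (fun i : Fin n => w.1.get (Fin.cast w.2.symm i)) := h
  refine Subtype.ext ?_
  rw [key v, key w, h']

/-- The action of a tree automorphism on the `n`-th level of the tree. -/
def levelHom (d n : ℕ) : TreeAut d →* Equiv.Perm (Level d n) where
  toFun g :=
    { toFun := fun v => ⟨(g : Equiv.Perm (List (Fin d))) v.1, by rw [g.2.1, v.2]⟩
      invFun := fun v => ⟨((g⁻¹ : TreeAut d) : Equiv.Perm (List (Fin d))) v.1,
        by rw [(g⁻¹ : TreeAut d).2.1, v.2]⟩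
      left_inv := fun v => Subtype.ext (by simp)
      right_inv := fun v => Subtype.ext (by simp) }
  map_one' := by ext v; rfl
  map_mul' g h := by ext v; rfl

/-- The fraction of elements of `G_n` (the image of `G` acting on level `n`)
having at least one fixed point on level `n`. -/
noncomputable def fixedRatio {d : ℕ} (G : Subgroup (TreeAut d)) (n : ℕ) : ℝ :=
  (Nat.card {p : Equiv.Perm (Level d n) // p ∈ G.map (levelHom d n) ∧ ∃ v, p v = v} : ℝ) /
    (Nat.card (G.map (levelHom d n)) : ℝ)

/-- `G ≤ Aut(X*)` is contracting: there is a finite subset `N ⊆ G` such that every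
`g ∈ G` has all its restrictions at sufficiently long words inside `N`. -/
def Contracting {d : ℕ} (G : Subgroup (TreeAut d)) : Prop :=
  ∃ N : Set (TreeAut d), N.Finite ∧ N ⊆ (G : Set (TreeAut d)) ∧
    ∀ g ∈ G, ∃ m : ℕ, 1 ≤ m ∧ ∀ v : List (Fin d), m ≤ v.length → TreeAut.restrict g v ∈ N

/-- The set `N₁` of elements of `G` fixing a non-empty word `v` with `g|_v = g`. -/
def N1 {d : ℕ} (G : Subgroup (TreeAut d)) : Set (TreeAut d) :=
  {g | g ∈ G ∧ ∃ v : List (Fin d), v ≠ [] ∧ TreeAut.restrict g v = g ∧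
    (g : Equiv.Perm (List (Fin d))) v = v}

/-
A self-replicating element `g` (with `g v = v` and `g|_v = g`) is its own restriction at every
power `v^k` of `v`; since `g v = v`, the same holds for every power `g^n`. As `v ≠ []`, the words
`v^k` are arbitrarily long, so contraction puts every `g^n` in the finite nucleus.
-/

namespace TreeAut

variable {d : ℕ}

theorem restrict_apply (g : TreeAut d) (v w : List (Fin d)) :
    (restrict g v : Equiv.Perm (List (Fin d))) w =
      ((g : Equiv.Perm (List (Fin d))) (v ++ w)).drop v.length := rfl

theorem restrict_nil (g : TreeAut d) : restrict g [] = g := by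
  ext w : 2
  simp [restrict_apply]

theorem restrict_one (v : List (Fin d)) : restrict 1 v = 1 := by
  ext w : 2
  simp [restrict_apply]

theorem restrict_mul (g h : TreeAut d) (v : List (Fin d)) :
    restrict (g * h) v = restrict g ((h : Equiv.Perm (List (Fin d))) v) * restrict h v := by
  ext w : 2
  change ((g : Equiv.Perm (List (Fin d))) ((h : Equiv.Perm (List (Fin d))) (v ++ w))).drop
      v.length = _
  rw [h.apply_append v w]
  nth_rewrite 1 [← h.length_apply v]
  rfl

theorem restrict_restrict (g : TreeAut d) (v w : List (Fin d)) :
    restrict (restrict g v) w = restrict g (v ++ w) := by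
  ext u : 2
  simp only [restrict_apply, List.drop_drop, List.length_append, List.append_assoc]

theorem restrict_flatten_replicate {g : TreeAut d} {v : List (Fin d)} (hg : restrict g v = g)
    (k : ℕ) : restrict g (List.replicate k v).flatten = g := by
  induction k with
  | zero => exact restrict_nil g
  | succ k ih => rw [List.replicate_succ, List.flatten_cons, ← restrict_restrict, hg, ih]

def selfReplicatingAt (v : List (Fin d)) : Submonoid (TreeAut d) where
  carrier := {g | (g : Equiv.Perm (List (Fin d))) v = v ∧ restrict g v = g}
  one_mem' := ⟨rfl, restrict_one v⟩
  mul_mem' := by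
    rintro g h ⟨hg_fix, hg_res⟩ ⟨hh_fix, hh_res⟩
    refine ⟨?_, ?_⟩
    · change (g : Equiv.Perm (List (Fin d))) ((h : Equiv.Perm (List (Fin d))) v) = v
      rw [hh_fix, hg_fix]
    · rw [restrict_mul, hh_fix, hg_res, hh_res]

end TreeAut

theorem Contracting.finite_setOf_restrict_eq_self {d : ℕ} {G : Subgroup (TreeAut d)}
    (hcon : Contracting G) :
    {g | g ∈ G ∧ ∃ v : List (Fin d), v ≠ [] ∧ TreeAut.restrict g v = g}.Finite := by
  obtain ⟨N, hN_fin, -, hN⟩ := hcon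
  refine hN_fin.subset ?_
  rintro g ⟨hgG, v, hv, hres⟩
  obtain ⟨m, -, hm⟩ := hN g hgG
  have hlen : m ≤ (List.replicate m v).flatten.length := by
    simpa [List.length_flatten, List.sum_replicate] using
      Nat.le_mul_of_pos_right m (List.length_pos_iff.mpr hv)
  simpa only [TreeAut.restrict_flatten_replicate hres] using hm _ hlen

theorem N1_isOfFinOrder_general {d : ℕ} (G : Subgroup (TreeAut d))
    (hcon : Contracting G) :
    ∀ g ∈ N1 G, IsOfFinOrder g := by
  rintro g ⟨hgG, v, hv, hres, hfix⟩
  refine finite_powers.mp (hcon.finite_setOf_restrict_eq_self.subset ?_)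
  rintro _ ⟨n, rfl⟩
  have hg : g ∈ TreeAut.selfReplicatingAt v := ⟨hfix, hres⟩
  exact ⟨pow_mem hgG n, v, hv, (pow_mem hg n).2⟩

/-- If `G ≤ Aut(X*)` is contracting, then every element of `N₁` (i.e. every `g ∈ G`
with `g|_v = g` and `g(v) = v` for some non-empty word `v`) has finite order. -/
theorem N1_isOfFinOrder {d : ℕ} (hd : 2 ≤ d) (G : Subgroup (TreeAut d))
    (hcon : Contracting G) :
    ∀ g ∈ N1 G, IsOfFinOrder g :=
  N1_isOfFinOrder_general G hcon
end

section
/- Let A be a kneading automaton over X, and let a, b ∈ A be distinct states such that the automorphisms g_a and g_b of X* are both finitary. Then at least one of g_a, g_b fixes infinitely many ends of X*. -/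
/-- The cycle graph of a multi-set (indexed family) of permutations of `X`: a bipartite
graph whose white vertices are the points of `X` and whose black vertices are the cycles
of length at least 2 of the permutations (counted with multiplicity over the index set),
a white vertex being joined to a cycle exactly when the cycle moves it. -/
def cycleGraph {I X : Type*} [Fintype X] [DecidableEq X] (π : I → Equiv.Perm X) :
    SimpleGraph (X ⊕ {p : I × Equiv.Perm X // p.2 ∈ (π p.1).cycleFactorsFinset}) where
  Adj a b := ∃ (x : X) (c : {p : I × Equiv.Perm X // p.2 ∈ (π p.1).cycleFactorsFinset}),
    c.1.2 x ≠ x ∧ ((a = Sum.inl x ∧ b = Sum.inr c) ∨ (a = Sum.inr c ∧ b = Sum.inl x))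
  symm := ⟨by
    rintro a b ⟨x, c, hc, (⟨rfl, rfl⟩ | ⟨rfl, rfl⟩)⟩
    · exact ⟨x, c, hc, Or.inr ⟨rfl, rfl⟩⟩
    · exact ⟨x, c, hc, Or.inl ⟨rfl, rfl⟩⟩⟩
  loopless := ⟨by
    rintro a ⟨x, c, hc, (⟨rfl, h⟩ | ⟨rfl, h⟩)⟩ <;> simp at h⟩

/-- A multi-set (indexed family) of permutations of `X` is tree-like if its cycle graph
is a tree. -/
def TreeLikeFamily {I X : Type*} [Fintype X] [DecidableEq X] (π : I → Equiv.Perm X) :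
    Prop :=
  (cycleGraph π).IsTree

/-- The number of fixed points of a permutation of a finite set. -/
def fixCard {X : Type*} [Fintype X] [DecidableEq X] (σ : Equiv.Perm X) : ℕ :=
  (Finset.univ.filter fun x => σ x = x).card

namespace TreeAutomaton

variable {d : ℕ} {S : Type*}

/-- The action of the state `a` of the automaton `(π, t)` on words: reading letter `x`
in state `a` outputs `π a x` and moves to state `t a x`. -/
def act (π : S → Equiv.Perm (Fin d)) (t : S → Fin d → S) : S → List (Fin d) → List (Fin d)
  | _, [] => []
  | a, x :: w => π a x :: act π t (t a x) w

/-- The action of the state `a` of the inverse automaton. -/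
def actInv (π : S → Equiv.Perm (Fin d)) (t : S → Fin d → S) : S → List (Fin d) → List (Fin d)
  | _, [] => []
  | a, x :: w => (π a).symm x :: actInv π t (t a ((π a).symm x)) w

theorem actInv_act (π : S → Equiv.Perm (Fin d)) (t : S → Fin d → S) :
    ∀ (w : List (Fin d)) (a : S), actInv π t a (act π t a w) = w
  | [], _ => rfl
  | x :: w, a => by
    simp only [act, actInv, Equiv.symm_apply_apply]
    rw [actInv_act π t w (t a x)]

theorem act_actInv (π : S → Equiv.Perm (Fin d)) (t : S → Fin d → S) :
    ∀ (w : List (Fin d)) (a : S), act π t a (actInv π t a w) = w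
  | [], _ => rfl
  | x :: w, a => by
    simp only [act, actInv, Equiv.apply_symm_apply]
    rw [act_actInv π t w (t a ((π a).symm x))]

theorem length_act (π : S → Equiv.Perm (Fin d)) (t : S → Fin d → S) :
    ∀ (w : List (Fin d)) (a : S), (act π t a w).length = w.length
  | [], _ => rfl
  | x :: w, a => by simp only [act, List.length_cons, length_act π t w (t a x)]

/-- The state of the automaton after reading the word `v` starting in state `a`. -/
def stateAfter (t : S → Fin d → S) : S → List (Fin d) → S
  | a, [] => a
  | a, x :: w => stateAfter t (t a x) w

/-- The state of the inverse automaton after reading the word `v` starting in state `a`. -/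
def invStateAfter (π : S → Equiv.Perm (Fin d)) (t : S → Fin d → S) : S → List (Fin d) → S
  | a, [] => a
  | a, x :: w => invStateAfter π t (t a ((π a).symm x)) w

theorem act_append (π : S → Equiv.Perm (Fin d)) (t : S → Fin d → S) :
    ∀ (v w : List (Fin d)) (a : S),
      act π t a (v ++ w) = act π t a v ++ act π t (stateAfter t a v) w
  | [], _, _ => rfl
  | x :: v, w, a => by
    simp only [List.cons_append, act, stateAfter, List.append_eq, act_append π t v w (t a x)]

theorem actInv_append (π : S → Equiv.Perm (Fin d)) (t : S → Fin d → S) :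
    ∀ (v w : List (Fin d)) (a : S),
      actInv π t a (v ++ w) = actInv π t a v ++ actInv π t (invStateAfter π t a v) w
  | [], _, _ => rfl
  | x :: v, w, a => by
    simp only [List.cons_append, actInv, invStateAfter, List.append_eq,
      actInv_append π t v w (t a ((π a).symm x))]

theorem act_prefix_iff (π : S → Equiv.Perm (Fin d)) (t : S → Fin d → S)
    (a : S) (v w : List (Fin d)) : v <+: w ↔ act π t a v <+: act π t a w := by
  constructor
  · rintro ⟨u, rfl⟩
    rw [act_append]
    exact ⟨_, rfl⟩
  · rintro ⟨u, hu⟩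
    have hw : w = actInv π t a (act π t a v ++ u) := by rw [hu, actInv_act]
    rw [actInv_append, actInv_act] at hw
    exact ⟨_, hw.symm⟩

/-- The tree automorphism defined by the state `a` of the invertible automaton `(π, t)`. -/
def state (π : S → Equiv.Perm (Fin d)) (t : S → Fin d → S) (a : S) : TreeAut d :=
  ⟨{ toFun := act π t a
     invFun := actInv π t a
     left_inv := fun w => actInv_act π t w a
     right_inv := fun w => act_actInv π t w a },
   ⟨fun v => length_act π t v a, fun v w => act_prefix_iff π t a v w⟩⟩

/-- A kneading automaton: a finite invertible automaton such that (1) every state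
defining a non-trivial automorphism has exactly one incoming arrow, (2) in each cycle of
the action of a state on `X` at most one letter has a non-trivial restriction, and
(3) the multi-set of permutations of `X` defined by the states is tree-like. -/
structure IsKneading (π : S → Equiv.Perm (Fin d)) (t : S → Fin d → S) : Prop where
  finite_states : Finite S
  unique_arrow : ∀ a : S, state π t a ≠ 1 → ∃! p : S × Fin d, t p.1 p.2 = a
  cycle_cond : ∀ (a : S) (x y : Fin d), (π a).SameCycle x y →
    state π t (t a x) ≠ 1 → state π t (t a y) ≠ 1 → x = y
  treelike : TreeLikeFamily π

/-- Condition (4) of Nekrashevych's characterization of iterated monodromy groups of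
post-critically finite polynomials. -/
def Cond4 (π : S → Equiv.Perm (Fin d)) (t : S → Fin d → S) : Prop :=
  ¬ ∃ (a₁ a₂ : S) (v₁ v₂ : List (Fin d)) (h : TreeAut d),
      a₁ ≠ a₂ ∧ state π t a₁ ≠ 1 ∧ state π t a₂ ≠ 1 ∧
      v₁ ≠ [] ∧ v₂ ≠ [] ∧
      TreeAut.restrict (state π t a₁) v₁ = state π t a₁ ∧
      (state π t a₁ : Equiv.Perm (List (Fin d))) v₁ = v₁ ∧
      TreeAut.restrict (state π t a₂) v₂ = state π t a₂ ∧
      (state π t a₂ : Equiv.Perm (List (Fin d))) v₂ = v₂ ∧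
      h ∈ Subgroup.closure (Set.range (state π t)) ∧
      (h : Equiv.Perm (List (Fin d))) v₁ = v₂ ∧ TreeAut.restrict h v₁ = h

/-- The state `a` lies in a cycle of the reduced Moore diagram of the automaton: reading
some non-empty word `v` from `a` returns to `a`, all the states traversed along the way
being non-trivial. -/
def InCycle (π : S → Equiv.Perm (Fin d)) (t : S → Fin d → S) (a : S) : Prop :=
  ∃ v : List (Fin d), v ≠ [] ∧ stateAfter t a v = a ∧
    ∀ u : List (Fin d), u <+: v → state π t (stateAfter t a u) ≠ 1

/-- A tree automorphism is finitary if its restrictions at all sufficiently long words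
are trivial. -/
def _root_.TreeAut.Finitary {d : ℕ} (g : TreeAut d) : Prop :=
  ∃ n : ℕ, ∀ v : List (Fin d), n ≤ v.length → TreeAut.restrict g v = 1

end TreeAutomaton

/-!
A finitary `g` with `g|_v = 1` for all `|v| ≥ N` fixes every end passing through a vertex of
level `N` that it fixes, and there are infinitely many such ends. So it suffices to show that
`g_a` or `g_b` fixes a vertex of level `N`.

Let `m_s(n)` be the number of words of length `n` moved by the state `s`, and
`M = ∑_s |supp π_s|`. Reading the first letter gives
`m_s(n+1) ≤ ∑_x m_{t(s,x)}(n) + |supp π_s| dⁿ`; since a state with `m ≠ 0` is non-trivial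
and has a unique incoming arrow, summing over `s` gives `∑_s m_s(n+1) ≤ ∑_s m_s(n) + M dⁿ`.
The cycle graph is a tree with `M` edges and `d + #cycles ≤ d + M / 2` vertices, so
`M + 2 ≤ 2d`, and by induction `∑_s m_s(n) + 2 ≤ 2dⁿ`. Hence `g_a` and `g_b` cannot both
move all `dᴺ` vertices of level `N`.
-/

theorem Equiv.Perm.sum_card_support_cycleFactorsFinset {X : Type*} [Fintype X] [DecidableEq X]
    (σ : Equiv.Perm X) : ∑ τ ∈ σ.cycleFactorsFinset, τ.support.card = σ.support.card := by
  rw [← Equiv.Perm.sum_cycleType, Equiv.Perm.cycleType_def]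
  rfl

section CycleGraph

variable {I X : Type*} [Fintype X] [DecidableEq X] {π : I → Equiv.Perm X}

/-- The black vertices of `cycleGraph π`. -/
abbrev CycleVertex (π : I → Equiv.Perm X) : Type _ :=
  {p : I × Equiv.Perm X // p.2 ∈ (π p.1).cycleFactorsFinset}

theorem sum_cycleVertex [Fintype I] (f : Equiv.Perm X → ℕ) :
    ∑ c : CycleVertex π, f c.1.2 = ∑ i, ∑ σ ∈ (π i).cycleFactorsFinset, f σ := by
  rw [← Fintype.sum_equiv (Equiv.subtypeProdEquivSigmaSubtype
    fun i σ => σ ∈ (π i).cycleFactorsFinset).symm _ _ fun _ => rfl, Fintype.sum_sigma]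
  exact Fintype.sum_congr _ _ fun i => Finset.sum_coe_sort _ f

theorem two_mul_card_cycleVertex_le [Fintype I] :
    2 * Nat.card (CycleVertex π) ≤ ∑ i, (π i).support.card := by
  rw [Nat.card_eq_fintype_card, Fintype.card_eq_sum_ones, sum_cycleVertex fun _ => 1,
    Finset.mul_sum]
  refine Finset.sum_le_sum fun i _ => ?_
  rw [← Equiv.Perm.sum_card_support_cycleFactorsFinset, Finset.mul_sum]
  exact Finset.sum_le_sum fun σ hσ =>
    (Equiv.Perm.mem_cycleFactorsFinset_iff.mp hσ).1.two_le_card_support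

theorem cycleGraph_adj_inr_inl {c : CycleVertex π} {x : X} :
    (cycleGraph π).Adj (Sum.inr c) (Sum.inl x) ↔ c.1.2 x ≠ x := by
  constructor
  · rintro ⟨y, c', hy, ⟨h, -⟩ | ⟨h, h'⟩⟩
    · cases h
    · cases h; cases h'; exact hy
  · exact fun hx => ⟨x, c, hx, Or.inr ⟨rfl, rfl⟩⟩

theorem cycleGraph_isBipartiteWith [Fintype I] :
    (cycleGraph π).IsBipartiteWith (Finset.univ.map (.inl : X ↪ X ⊕ CycleVertex π) : Set _)
      (Finset.univ.map (.inr : CycleVertex π ↪ X ⊕ CycleVertex π) : Set _) where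
  disjoint := by simp [Set.disjoint_left]
  mem_of_adj := by
    rintro _ _ ⟨x, c, -, ⟨rfl, rfl⟩ | ⟨rfl, rfl⟩⟩ <;> simp

theorem cycleGraph_degree_inr (c : CycleVertex π)
    [Fintype ((cycleGraph π).neighborSet (Sum.inr c))] :
    (cycleGraph π).degree (Sum.inr c) = c.1.2.support.card := by
  rw [← SimpleGraph.card_neighborFinset_eq_degree,
    ← Finset.card_map (s := c.1.2.support) (.inl : X ↪ X ⊕ CycleVertex π)]
  congr 1
  ext (x | c')
  · simp [cycleGraph_adj_inr_inl]
  · simp only [SimpleGraph.mem_neighborFinset, Finset.mem_map, Function.Embedding.inl_apply,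
      reduceCtorEq, and_false, exists_false, iff_false]
    rintro ⟨y, c'', -, ⟨h, -⟩ | ⟨-, h⟩⟩ <;> cases h

theorem cycleGraph_card_edgeSet [Fintype I] :
    Nat.card (cycleGraph π).edgeSet = ∑ i, (π i).support.card := by
  classical
  rw [Nat.card_eq_fintype_card, ← SimpleGraph.edgeFinset_card,
    ← SimpleGraph.isBipartiteWith_sum_degrees_eq_card_edges' cycleGraph_isBipartiteWith,
    Finset.sum_map]
  refine (Fintype.sum_congr _ _ fun c => cycleGraph_degree_inr c).trans ?_
  rw [sum_cycleVertex fun σ => σ.support.card]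
  simp_rw [Equiv.Perm.sum_card_support_cycleFactorsFinset]

theorem TreeLikeFamily.sum_card_support_add_two_le [Fintype I] (h : TreeLikeFamily π) :
    ∑ i, (π i).support.card + 2 ≤ 2 * Fintype.card X := by
  have htree := (SimpleGraph.isTree_iff_connected_and_card.mp h).2
  rw [cycleGraph_card_edgeSet, Nat.card_sum, Nat.card_eq_fintype_card (α := X)] at htree
  have hcycles := two_mul_card_cycleVertex_le (π := π)
  dsimp only [CycleVertex] at hcycles
  omega

end CycleGraph

namespace TreeAut

variable {d : ℕ}

theorem apply_eq_self_of_prefix (g : TreeAut d) {u v : List (Fin d)} (huv : u <+: v)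
    (hv : (g : Equiv.Perm (List (Fin d))) v = v) : (g : Equiv.Perm (List (Fin d))) u = u := by
  have hgu : (g : Equiv.Perm (List (Fin d))) u <+: v := hv ▸ (g.prefix_iff u v).mp huv
  exact (List.prefix_of_prefix_length_le hgu huv (g.length_apply u).le).eq_of_length
    (g.length_apply u)

theorem apply_append_eq_self (g : TreeAut d) {v : List (Fin d)} (hr : g.restrict v = 1)
    (hv : (g : Equiv.Perm (List (Fin d))) v = v) (w : List (Fin d)) :
    (g : Equiv.Perm (List (Fin d))) (v ++ w) = v ++ w := by
  have hw : ((g.restrict v : TreeAut d) : Equiv.Perm (List (Fin d))) w = w := by rw [hr]; rfl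
  rw [g.apply_append, hv]
  exact congrArg (v ++ ·) hw

theorem fixesEnd_of_restrict_eq_one (g : TreeAut d) {v : List (Fin d)} (hr : g.restrict v = 1)
    (hv : (g : Equiv.Perm (List (Fin d))) v = v) {w : ℕ → Fin d}
    (hw : (List.range v.length).map w = v) : g.FixesEnd w := by
  intro m
  rcases le_total m v.length with hm | hm
  · refine g.apply_eq_self_of_prefix ?_ hv
    rw [← hw]
    refine List.IsPrefix.map w ?_
    rw [List.prefix_iff_eq_take, List.take_range, List.length_range, min_eq_left hm]
  · obtain ⟨k, rfl⟩ := Nat.exists_eq_add_of_le hm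
    rw [List.range_add, List.map_append, hw]
    exact g.apply_append_eq_self hr hv _

theorem infinite_setOf_fixesEnd (hd : 2 ≤ d) (g : TreeAut d) {v : List (Fin d)}
    (hr : g.restrict v = 1) (hv : (g : Equiv.Perm (List (Fin d))) v = v) :
    {w : ℕ → Fin d | g.FixesEnd w}.Infinite := by
  have : Nontrivial (Fin d) := Fin.nontrivial_iff_two_le.mpr hd
  let extend (u : ℕ → Fin d) (i : ℕ) : Fin d :=
    if h : i < v.length then v[i] else u (i - v.length)
  refine Set.infinite_of_injective_forall_mem (f := extend) (fun u u' h => ?_) fun u => ?_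
  · funext i
    simpa [extend] using congrFun h (v.length + i)
  · refine g.fixesEnd_of_restrict_eq_one hr hv (List.ext_getElem (by simp) fun i hi _ => ?_)
    rw [List.length_map, List.length_range] at hi
    simp [extend, hi]

end TreeAut

namespace TreeAutomaton

variable {d : ℕ} {S : Type*}

section

variable (π : S → Equiv.Perm (Fin d)) (t : S → Fin d → S)

/-- The number of words of length `n` moved by the state `s`, computed by reading the first
letter. -/
def movedCount : S → ℕ → ℕ
  | _, 0 => 0
  | s, n + 1 => ∑ x, if π s x = x then movedCount (t s x) n else d ^ n

theorem exists_act_eq_self_of_movedCount_lt :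
    ∀ {s : S} {n : ℕ}, movedCount π t s n < d ^ n → ∃ v, v.length = n ∧ act π t s v = v
  | _, 0, _ => ⟨[], rfl, rfl⟩
  | s, n + 1, h => by
    have hlt : movedCount π t s (n + 1) < ∑ _x : Fin d, d ^ n := by simpa [pow_succ'] using h
    obtain ⟨x, -, hx⟩ := Finset.exists_lt_of_sum_lt hlt
    by_cases hfix : π s x = x
    · rw [if_pos hfix] at hx
      obtain ⟨v, hv, hact⟩ := exists_act_eq_self_of_movedCount_lt hx
      exact ⟨x :: v, by simp [hv], by simp [act, hfix, hact]⟩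
    · exact absurd hx (by simp [hfix])

theorem infinite_setOf_fixesEnd_of_movedCount_lt (hd : 2 ≤ d) {s : S} {n : ℕ}
    (hn : ∀ v : List (Fin d), n ≤ v.length → (state π t s).restrict v = 1)
    (h : movedCount π t s n < d ^ n) : {w | (state π t s).FixesEnd w}.Infinite := by
  obtain ⟨v, hv, hfix⟩ := exists_act_eq_self_of_movedCount_lt π t h
  exact (state π t s).infinite_setOf_fixesEnd hd (hn v hv.ge) hfix

theorem movedCount_eq_zero_of_state_eq_one {s : S} (h : state π t s = 1) (n : ℕ) :
    movedCount π t s n = 0 := by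
  induction n generalizing s with
  | zero => rfl
  | succ n ih =>
    have hact : ∀ w, act π t s w = w := fun w => congrArg (· w) (congrArg Subtype.val h)
    refine Finset.sum_eq_zero fun x _ => ?_
    have hcons : π s x :: act π t (t s x) [] = [x] := hact [x]
    have hx : π s x = x := List.head_eq_of_cons_eq hcons
    have ht : state π t (t s x) = 1 := by
      refine Subtype.ext (Equiv.ext fun w => ?_)
      show act π t (t s x) w = w
      simpa [act, hx] using hact (x :: w)
    rw [if_pos hx, ih ht]

theorem movedCount_succ_le (s : S) (n : ℕ) :
    movedCount π t s (n + 1) ≤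
      ∑ x, movedCount π t (t s x) n + (π s).support.card * d ^ n := by
  classical
  calc movedCount π t s (n + 1)
      ≤ ∑ x, (movedCount π t (t s x) n + if π s x = x then 0 else d ^ n) :=
        Finset.sum_le_sum fun x _ => by split_ifs <;> omega
    _ = ∑ x, movedCount π t (t s x) n + (π s).support.card * d ^ n := by
        rw [Finset.sum_add_distrib, Finset.sum_ite, Finset.sum_const_zero, Finset.sum_const,
          smul_eq_mul, zero_add]
        congr 2

end

variable [Fintype S] {π : S → Equiv.Perm (Fin d)} {t : S → Fin d → S}

theorem sum_movedCount_comp_le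
    (hunique : ∀ a : S, state π t a ≠ 1 → ∃! p : S × Fin d, t p.1 p.2 = a) (n : ℕ) :
    ∑ p : S × Fin d, movedCount π t (t p.1 p.2) n ≤ ∑ c, movedCount π t c n := by
  classical
  have hinj : Set.InjOn (fun p : S × Fin d => t p.1 p.2)
      {p | movedCount π t (t p.1 p.2) n ≠ 0} := fun p hp q _ hpq => by
    obtain ⟨_, -, huniq⟩ := hunique _
      fun h => hp (movedCount_eq_zero_of_state_eq_one π t h n)
    exact (huniq p rfl).trans (huniq q hpq.symm).symm
  rw [← Finset.sum_filter_ne_zero, ← Finset.sum_image (g := fun p : S × Fin d => t p.1 p.2)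
    (f := fun c => movedCount π t c n)
    fun p hp q hq => hinj (by simpa using hp) (by simpa using hq)]
  exact Finset.sum_le_sum_of_subset (Finset.subset_univ _)

theorem sum_movedCount_succ_le
    (hunique : ∀ a : S, state π t a ≠ 1 → ∃! p : S × Fin d, t p.1 p.2 = a) (n : ℕ) :
    ∑ s, movedCount π t s (n + 1) ≤
      ∑ s, movedCount π t s n + (∑ s, (π s).support.card) * d ^ n :=
  calc ∑ s, movedCount π t s (n + 1)
      ≤ ∑ s, (∑ x, movedCount π t (t s x) n + (π s).support.card * d ^ n) :=
        Finset.sum_le_sum fun s _ => movedCount_succ_le π t s n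
    _ = ∑ p : S × Fin d, movedCount π t (t p.1 p.2) n +
          (∑ s, (π s).support.card) * d ^ n := by
        rw [Finset.sum_add_distrib, Fintype.sum_prod_type, Finset.sum_mul]
    _ ≤ _ := Nat.add_le_add_right (sum_movedCount_comp_le hunique n) _

theorem sum_movedCount_add_two_le (hk : IsKneading π t) (n : ℕ) :
    ∑ s, movedCount π t s n + 2 ≤ 2 * d ^ n := by
  induction n with
  | zero => simp [movedCount]
  | succ n ih =>
    have hsupp := hk.treelike.sum_card_support_add_two_le
    rw [Fintype.card_fin] at hsupp
    calc ∑ s, movedCount π t s (n + 1) + 2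
        ≤ (∑ s, movedCount π t s n + 2) + (∑ s, (π s).support.card) * d ^ n := by
          have := sum_movedCount_succ_le hk.unique_arrow n; omega
      _ ≤ 2 * d ^ n + (∑ s, (π s).support.card) * d ^ n := by gcongr
      _ = (∑ s, (π s).support.card + 2) * d ^ n := by ring
      _ ≤ 2 * d * d ^ n := by gcongr
      _ = 2 * d ^ (n + 1) := by ring

theorem movedCount_lt_pow_or_lt_pow (hk : IsKneading π t) {a b : S} (hab : a ≠ b) (n : ℕ) :
    movedCount π t a n < d ^ n ∨ movedCount π t b n < d ^ n := by
  classical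
  by_contra! h
  have hpair := Finset.sum_le_sum_of_subset (f := fun s => movedCount π t s n)
    (Finset.subset_univ {a, b})
  rw [Finset.sum_pair hab] at hpair
  have := sum_movedCount_add_two_le hk n
  omega

end TreeAutomaton

open TreeAutomaton in
/-- If `a ≠ b` are states of a kneading automaton whose associated tree automorphisms are
both finitary, then at least one of them fixes infinitely many ends of `X*`. -/
theorem kneading_finitary_fixes_ends {d : ℕ} (hd : 2 ≤ d) {S : Type*}
    (π : S → Equiv.Perm (Fin d)) (t : S → Fin d → S)
    (hk : IsKneading π t) (a b : S) (hab : a ≠ b)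
    (ha : (state π t a).Finitary) (hb : (state π t b).Finitary) :
    {w : ℕ → Fin d | TreeAut.FixesEnd (state π t a) w}.Infinite ∨
      {w : ℕ → Fin d | TreeAut.FixesEnd (state π t b) w}.Infinite := by
  have := hk.finite_states
  have := Fintype.ofFinite S
  obtain ⟨na, hna⟩ := ha
  obtain ⟨nb, hnb⟩ := hb
  rcases movedCount_lt_pow_or_lt_pow hk hab (max na nb) with h | h
  · exact Or.inl <| infinite_setOf_fixesEnd_of_movedCount_lt π t hd
      (fun v hv => hna v (le_of_max_le_left hv)) h
  · exact Or.inr <| infinite_setOf_fixesEnd_of_movedCount_lt π t hd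
      (fun v hv => hnb v (le_of_max_le_right hv)) h
end
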